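/- arXiv:math/0305287 — 3 statements merged into one kernel-verified Lean document; each statement's English description precedes it below -/
import Mathlib

section
/- In the setup described in the context, suppose in addition that there is an integer k₀ ≥ 1 such that V^{p,q} = 0 unless 0 ≤ p ≤ k₀ − 1. Then there exist c > 0 and r₀ > 0 such that for all r ∈ (0, r₀), every nonzero eigenvalue μ of the self-adjoint operator ã_r satisfies |μ| ≥ c · r^{(k₀−1)/2}. -/
noncomputable section

/-- A sequence `w` with `w 0 = v₀` is a *zig-zag of length `k`* for the family `a` if
`∑_{i=0}^{j} a⁽ⁱ⁾ w_{j−i} = 0` for all `j = 0, …, k−1`. -/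
abbrev IsZigZag {V : Type*} [AddCommGroup V] [Module ℂ V]
    (a : ℕ → Module.End ℂ V) (k : ℕ) (w : ℕ → V) : Prop :=
  ∀ j < k, ∑ i ∈ Finset.range (j + 1), (a i) (w (j - i)) = 0

/-- `Ek a k` is the space of all `v₀` admitting a zig-zag of length `k`
(so `Ek a 0 = V` and `Ek a 1 = ker a⁽⁰⁾`). -/
def Ek {V : Type*} [AddCommGroup V] [Module ℂ V]
    (a : ℕ → Module.End ℂ V) (k : ℕ) : Submodule ℂ V where
  carrier := {v | ∃ w : ℕ → V, w 0 = v ∧ IsZigZag a k w}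
  zero_mem' := ⟨fun _ => 0, rfl, fun j _ => by simp⟩
  add_mem' := by
    rintro x y ⟨w, hw0, hw⟩ ⟨u, hu0, hu⟩
    refine ⟨fun n => w n + u n, by show w 0 + u 0 = _; rw [hw0, hu0], fun j hj => ?_⟩
    simp only [map_add, Finset.sum_add_distrib, hw j hj, hu j hj, add_zero]
  smul_mem' := by
    rintro c x ⟨w, hw0, hw⟩
    refine ⟨fun n => c • w n, by show c • w 0 = _; rw [hw0], fun j hj => ?_⟩
    simp only [map_smul, ← Finset.smul_sum, hw j hj, smul_zero]

variable {V : Type*} [NormedAddCommGroup V] [InnerProductSpace ℂ V] [FiniteDimensional ℂ V]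

/-- The orthogonal projection onto a subspace, as an endomorphism of the ambient space. -/
def projEnd (K : Submodule ℂ V) : Module.End ℂ V :=
  K.subtype ∘ₗ (K.orthogonalProjection).toLinearMap

/-- `a⁽ⁱ⁾ := (a′⁽ⁱ⁾ + a″⁽ⁱ⁾)/2`, where `a″⁽ⁱ⁾ = (a′⁽ⁱ⁾)*`. -/
def asym (aP : ℕ → Module.End ℂ V) (i : ℕ) : Module.End ℂ V :=
  (2⁻¹ : ℂ) • (aP i + LinearMap.adjoint (aP i))

/-- `x⁽ⁱ⁾ := (a″⁽ⁱ⁾ − a′⁽ⁱ⁾)/2`, where `a″⁽ⁱ⁾ = (a′⁽ⁱ⁾)*`. -/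
def xskew (aP : ℕ → Module.End ℂ V) (i : ℕ) : Module.End ℂ V :=
  (2⁻¹ : ℂ) • (LinearMap.adjoint (aP i) - aP i)

/-- `ã_r := ∑_{i≥0} r^{i/2} a⁽ⁱ⁾`. -/
def atil (aP : ℕ → Module.End ℂ V) (r : ℝ) : Module.End ℂ V :=
  ∑ᶠ i : ℕ, ((Real.sqrt r : ℂ) ^ i) • asym aP i

/-- `x̃_r := ∑_{i≥0} r^{i/2} x⁽ⁱ⁾`. -/
def xtil (aP : ℕ → Module.End ℂ V) (r : ℝ) : Module.End ℂ V :=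
  ∑ᶠ i : ℕ, ((Real.sqrt r : ℂ) ^ i) • xskew aP i

/-- `D` is *the* operator `d_k` on `E_k`: for `k = 0` it is `a⁽⁰⁾`, and for `k ≥ 1` it is
given by `d_k v₀ = Π_k (∑_{i=1}^{k} a⁽ⁱ⁾ v_{k−i})` for any zig-zag `(v₁,…,v_{k−1})` of `v₀`. -/
def IsPageOp (a : ℕ → Module.End ℂ V) (k : ℕ) (D : Module.End ℂ ↥(Ek a k)) : Prop :=
  if k = 0 then ∀ v : ↥(Ek a k), (D v : V) = a 0 (v : V)
  else ∀ (v : ↥(Ek a k)) (w : ℕ → V), w 0 = (v : V) → IsZigZag a k w →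
    (D v : V) = projEnd (Ek a k) (∑ i ∈ Finset.Icc 1 k, (a i) (w (k - i)))

/-- Operator norm of an endomorphism of a finite-dimensional normed space. -/
def opNorm (f : Module.End ℂ V) : ℝ := ‖LinearMap.toContinuousLinearMap f‖


local notation "⟪" x ", " y "⟫" => @inner ℂ _ _ x y

lemma projEnd_mem {K : Submodule ℂ V} {x : V} (hx : x ∈ K) : projEnd K x = x := by
  exact Submodule.starProjection_eq_self_iff.2 hx

lemma projEnd_orth {K : Submodule ℂ V} {x : V} (hx : x ∈ Kᗮ) : projEnd K x = 0 := by
  simp [projEnd, Submodule.orthogonalProjectionOnto_apply_of_mem_orthogonal hx]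

lemma projEnd_bot : projEnd (⊥ : Submodule ℂ V) = 0 := by
  ext x
  exact projEnd_orth (by simp)

lemma projEnd_adjoint (K : Submodule ℂ V) :
    LinearMap.adjoint (projEnd K) = projEnd K := by
  have h : (projEnd K : Module.End ℂ V).IsSymmetric := by
    exact Submodule.starProjection_isSymmetric K
  have := (LinearMap.isSymmetric_iff_isSelfAdjoint _).1 h
  rw [← LinearMap.star_eq_adjoint]; exact this

lemma inner_projEnd_self (K : Submodule ℂ V) (x : V) :
    ⟪x, projEnd K x⟫ = ((‖projEnd K x‖ : ℂ)) ^ 2 := by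
  have hmem : projEnd K x ∈ K := by
    simpa [projEnd] using (orthogonalProjection K x).2
  have hsub : x - projEnd K x ∈ Kᗮ := by
    exact Submodule.sub_starProjection_mem_orthogonal (K := K) x
  have h0 : ⟪x - projEnd K x, projEnd K x⟫ = 0 :=
    inner_eq_zero_symm.1 (hsub _ hmem)
  have : ⟪x, projEnd K x⟫ = ⟪projEnd K x, projEnd K x⟫ + ⟪x - projEnd K x, projEnd K x⟫ := by
    rw [← inner_add_left, add_sub_cancel]
  rw [this, h0, add_zero, inner_self_eq_norm_sq_to_K]
  norm_num

section SC

variable (W : ℤ × ℤ → Submodule ℂ V)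

def scOp (c : ℤ → ℝ) : Module.End ℂ V :=
  ∑ᶠ pq : ℤ × ℤ, ((c pq.1 : ℂ)) • projEnd (W pq)

variable {W}
variable (hWfin : {pq : ℤ × ℤ | W pq ≠ ⊥}.Finite)

lemma scOp_eq_sum (c : ℤ → ℝ) :
    scOp W c = ∑ pq ∈ hWfin.toFinset, ((c pq.1 : ℂ)) • projEnd (W pq) := by
  apply finsum_eq_finset_sum_of_support_subset
  intro pq hpq
  simp only [Function.mem_support, ne_eq] at hpq
  simp only [Set.Finite.coe_toFinset, Set.mem_setOf_eq]
  intro hbot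
  exact hpq (by rw [hbot, projEnd_bot, smul_zero])

variable (hWorth : ∀ pq pq' : ℤ × ℤ, pq ≠ pq' → ∀ x ∈ W pq, ∀ y ∈ W pq', (inner ℂ x y : ℂ) = 0)

include hWfin hWorth in
lemma scOp_apply (c : ℤ → ℝ) {p q : ℤ} {x : V} (hx : x ∈ W (p, q)) :
    scOp W c x = ((c p : ℂ)) • x := by
  by_cases hbot : W (p, q) = ⊥
  · rw [hbot] at hx
    simp only [Submodule.mem_bot] at hx
    simp [hx]
  · rw [scOp_eq_sum hWfin, LinearMap.sum_apply]
    rw [Finset.sum_eq_single (p, q)]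
    · simp [projEnd_mem hx]
    · intro pq' hpq' hne
      have hxorth : x ∈ (W pq')ᗮ := by
        intro u hu
        exact hWorth pq' (p, q) hne u hu x hx
      simp [projEnd_orth hxorth]
    · intro h
      exact absurd (hWfin.mem_toFinset.2 hbot) h

lemma internal_ext (hW : DirectSum.IsInternal W) {f g : Module.End ℂ V}
    (h : ∀ pq : ℤ × ℤ, ∀ x ∈ W pq, f x = g x) : f = g := by
  ext v
  have hv : v ∈ iSup W := by rw [hW.submodule_iSup_eq_top]; trivial
  refine Submodule.iSup_induction W (motive := fun v => f v = g v) hv (fun pq x hx => h pq x hx) (by simp) ?_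
  intro x y hx hy
  simp [map_add, hx, hy]

include hWfin in
lemma scOp_adjoint (c : ℤ → ℝ) : LinearMap.adjoint (scOp W c) = scOp W c := by
  rw [scOp_eq_sum hWfin]
  rw [map_sum]
  refine Finset.sum_congr rfl fun pq _ => ?_
  rw [map_smulₛₗ, projEnd_adjoint]
  simp [Complex.conj_ofReal]

include hWfin hWorth in
lemma scOp_comp (hW : DirectSum.IsInternal W) (c d : ℤ → ℝ) :
    scOp W c ∘ₗ scOp W d = scOp W (fun p => c p * d p) := by
  refine internal_ext hW fun pq x hx => ?_
  rcases pq with ⟨p, q⟩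
  simp only [LinearMap.comp_apply]
  rw [scOp_apply hWfin hWorth _ hx, map_smul, scOp_apply hWfin hWorth _ hx,
    scOp_apply hWfin hWorth _ hx]
  rw [smul_smul]; norm_cast; ring_nf

include hWfin in
lemma inner_scOp_self_nonneg (c : ℤ → ℝ) (hc : ∀ p q : ℤ, W (p, q) ≠ ⊥ → 0 ≤ c p) (x : V) :
    0 ≤ (⟪x, scOp W c x⟫).re := by
  rw [scOp_eq_sum hWfin, LinearMap.sum_apply, inner_sum]
  rw [Complex.re_sum]
  refine Finset.sum_nonneg fun pq hpq => ?_
  rw [LinearMap.smul_apply, inner_smul_right, inner_projEnd_self]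
  have hbot : W pq ≠ ⊥ := (hWfin.mem_toFinset.1 hpq)
  have : (0:ℝ) ≤ c pq.1 := hc pq.1 pq.2 (by rcases pq with ⟨p,q⟩; exact hbot)
  have : ((c pq.1 : ℂ)) * ((‖projEnd (W pq) x‖ : ℂ)) ^ 2
      = (((c pq.1) * ‖projEnd (W pq) x‖ ^ 2 : ℝ) : ℂ) := by push_cast; ring
  rw [this]
  rw [Complex.ofReal_re]
  positivity

end SC

section SC2

variable {W : ℤ × ℤ → Submodule ℂ V}
variable (hWfin : {pq : ℤ × ℤ | W pq ≠ ⊥}.Finite)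
variable (hWorth : ∀ pq pq' : ℤ × ℤ, pq ≠ pq' → ∀ x ∈ W pq, ∀ y ∈ W pq', (inner ℂ x y : ℂ) = 0)

include hWfin hWorth in
lemma scOp_one (hW : DirectSum.IsInternal W) : scOp W (fun _ => 1) = LinearMap.id := by
  refine internal_ext hW fun pq x hx => ?_
  rcases pq with ⟨p, q⟩
  rw [scOp_apply hWfin hWorth _ hx]
  simp

include hWfin hWorth in
lemma scOp_norm_lb (hW : DirectSum.IsInternal W) (c : ℤ → ℝ) (γ : ℝ) (hγ : 0 ≤ γ)
    (hc : ∀ p q : ℤ, W (p, q) ≠ ⊥ → γ ^ 2 ≤ c p * c p) (x : V) :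
    γ * ‖x‖ ≤ ‖scOp W c x‖ := by
  have key : γ ^ 2 * ‖x‖ ^ 2 ≤ ‖scOp W c x‖ ^ 2 := by
    have h1 : (‖scOp W c x‖ : ℝ) ^ 2 = (⟪scOp W c x, scOp W c x⟫).re := by
      rw [inner_self_eq_norm_sq_to_K]; norm_cast
    have h2 : ⟪scOp W c x, scOp W c x⟫ = ⟪x, (scOp W c ∘ₗ scOp W c) x⟫ := by
      rw [LinearMap.comp_apply,
        ← LinearMap.adjoint_inner_left (scOp W c) (scOp W c x) x, scOp_adjoint hWfin]
    have h3 : scOp W c ∘ₗ scOp W c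
        = scOp W (fun p => c p * c p - γ ^ 2) + (γ ^ 2 : ℂ) • LinearMap.id := by
      refine internal_ext hW fun pq y hy => ?_
      rcases pq with ⟨p, q⟩
      rw [LinearMap.comp_apply, scOp_apply hWfin hWorth _ hy, map_smul,
        scOp_apply hWfin hWorth _ hy]
      rw [LinearMap.add_apply, scOp_apply hWfin hWorth _ hy]
      simp only [LinearMap.smul_apply, LinearMap.id_apply, smul_smul]
      rw [← add_smul]
      norm_cast
      try ring_nf
    have h4 : (⟪x, scOp W (fun p => c p * c p - γ ^ 2) x⟫).re ≥ 0 := by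
      refine inner_scOp_self_nonneg hWfin _ (fun p q hbot => ?_) x
      have := hc p q hbot
      linarith
    have h5 : ⟪x, ((γ ^ 2 : ℂ) • LinearMap.id : Module.End ℂ V) x⟫
        = (γ:ℂ) ^ 2 * ((‖x‖:ℂ)) ^ 2 := by
      simp [inner_smul_right, inner_self_eq_norm_sq_to_K]
      try norm_cast
    rw [h1, h2, h3, LinearMap.add_apply, inner_add_right, Complex.add_re, h5]
    have : ((γ:ℂ) ^ 2 * ((‖x‖:ℂ)) ^ 2).re = γ ^ 2 * ‖x‖ ^ 2 := by
      norm_cast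
    rw [this]
    linarith
  have hnn : 0 ≤ γ * ‖x‖ := by positivity
  nlinarith [norm_nonneg (scOp W c x)]

end SC2

section LB

lemma ker_adjoint_End (B : Module.End ℂ V) :
    LinearMap.ker (LinearMap.adjoint B) = (LinearMap.range B)ᗮ := by
  ext x
  constructor
  · intro hx
    intro u hu
    obtain ⟨y, rfl⟩ := hu
    rw [← LinearMap.adjoint_inner_right]
    rw [LinearMap.mem_ker.1 hx]
    simp
  · intro hx
    rw [LinearMap.mem_ker, ← inner_self_eq_zero (𝕜 := ℂ)]
    rw [LinearMap.adjoint_inner_right]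
    exact hx _ ⟨_, rfl⟩

lemma adjoint_lb (B : Module.End ℂ V) (β : ℝ) (hβ : 0 < β)
    (h : ∀ x ∈ (LinearMap.ker B)ᗮ, β * ‖x‖ ≤ ‖B x‖) :
    ∀ u ∈ (LinearMap.ker (LinearMap.adjoint B))ᗮ, β * ‖u‖ ≤ ‖LinearMap.adjoint B u‖ := by
  intro u hu
  have hur : u ∈ LinearMap.range B := by
    rw [ker_adjoint_End] at hu
    rwa [Submodule.orthogonal_orthogonal] at hu
  obtain ⟨y, rfl⟩ := hur
  set K := LinearMap.ker B with hK
  have hy₁ : (y - projEnd K y) ∈ Kᗮ := by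
    exact Submodule.sub_starProjection_mem_orthogonal (K := K) y
  set y₁ : V := y - projEnd K y with hy₁def
  have hby : B y = B y₁ := by
    have hm : projEnd K y ∈ K := by simpa [projEnd] using (orthogonalProjection K y).2
    have h0 : B (projEnd K y) = 0 := LinearMap.mem_ker.1 hm
    rw [hy₁def, map_sub, h0, sub_zero]
  by_cases hu0 : B y = 0
  · simp [hu0]
  · have hnorm : ‖B y‖ ^ 2 ≤ ‖y₁‖ * ‖LinearMap.adjoint B (B y)‖ := by
      have e1 : (‖B y‖ : ℝ) ^ 2 = (⟪B y₁, B y⟫).re := by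
        rw [← hby, inner_self_eq_norm_sq_to_K]; norm_cast
      have e2 : ⟪B y₁, B y⟫ = ⟪y₁, LinearMap.adjoint B (B y)⟫ := by
        rw [LinearMap.adjoint_inner_right]
      calc (‖B y‖ : ℝ) ^ 2 = (⟪y₁, LinearMap.adjoint B (B y)⟫).re := by rw [e1, e2]
        _ ≤ ‖⟪y₁, LinearMap.adjoint B (B y)⟫‖ := Complex.re_le_norm _
        _ ≤ ‖y₁‖ * ‖LinearMap.adjoint B (B y)‖ := norm_inner_le_norm _ _
    have hy1 : β * ‖y₁‖ ≤ ‖B y‖ := by rw [hby]; exact h y₁ hy₁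
    have hBy : 0 < ‖B y‖ := norm_pos_iff.2 hu0
    nlinarith [norm_nonneg y₁, norm_nonneg (LinearMap.adjoint B (B y))]

lemma comp_lb (S C : Module.End ℂ V) (α β : ℝ) (hα : 0 < α) (hβ : 0 ≤ β)
    (hS : ∀ x, α * ‖x‖ ≤ ‖S x‖)
    (hC : ∀ x ∈ (LinearMap.ker C)ᗮ, β * ‖x‖ ≤ ‖C x‖) :
    ∀ x ∈ (LinearMap.ker (S ∘ₗ C))ᗮ, (α * β) * ‖x‖ ≤ ‖(S ∘ₗ C) x‖ := by
  have hSinj : ∀ w, S w = 0 → w = 0 := by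
    intro w hw
    have h1 := hS w
    rw [hw] at h1
    simp only [norm_zero] at h1
    have : ‖w‖ = 0 := le_antisymm (by nlinarith) (norm_nonneg w)
    exact norm_eq_zero.1 this
  have hker : LinearMap.ker (S ∘ₗ C) = LinearMap.ker C := by
    ext z
    simp only [LinearMap.mem_ker, LinearMap.comp_apply]
    exact ⟨fun hz => hSinj _ hz, fun hz => by rw [hz, map_zero]⟩
  intro x hx
  rw [hker] at hx
  calc (α * β) * ‖x‖ = α * (β * ‖x‖) := by ring
    _ ≤ α * ‖C x‖ := by
        have := hC x hx
        nlinarith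
    _ ≤ ‖S (C x)‖ := hS _
    _ = ‖(S ∘ₗ C) x‖ := rfl

lemma exists_lb (A : Module.End ℂ V) :
    ∃ m > (0:ℝ), ∀ x ∈ (LinearMap.ker A)ᗮ, m * ‖x‖ ≤ ‖A x‖ := by
  set K := (LinearMap.ker A)ᗮ
  set B : K →ₗ[ℂ] V := A.domRestrict K
  have hB : LinearMap.ker B = ⊥ := by
    rw [LinearMap.ker_eq_bot']
    intro z hz
    have hz1 : (z : V) ∈ LinearMap.ker A := LinearMap.mem_ker.2 hz
    have : (z : V) = 0 := by
      have hd := Submodule.orthogonal_disjoint (LinearMap.ker A)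
      exact (Submodule.disjoint_def.1 hd.symm) _ z.2 hz1
    exact Subtype.ext this
  obtain ⟨Kc, hKc, hanti⟩ := B.exists_antilipschitzWith hB
  refine ⟨(Kc : ℝ)⁻¹, by positivity, fun x hx => ?_⟩
  have := hanti.le_mul_dist (⟨x, hx⟩ : K) 0
  simp only [dist_zero_right, map_zero] at this
  have hx' : ‖(⟨x, hx⟩ : K)‖ = ‖x‖ := rfl
  have hBx : B ⟨x, hx⟩ = A x := rfl
  rw [hx', hBx] at this
  have hKpos : (0:ℝ) < (Kc : ℝ) := hKc
  rw [inv_mul_le_iff₀ hKpos]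
  linarith [this]

end LB

def btil (aP : ℕ → Module.End ℂ V) (r : ℝ) : Module.End ℂ V :=
  ∑ᶠ i : ℕ, ((Real.sqrt r : ℂ) ^ i) • aP i

variable {aP : ℕ → Module.End ℂ V} (haPfin : {i : ℕ | aP i ≠ 0}.Finite)

include haPfin in
lemma btil_eq_sum (r : ℝ) :
    btil aP r = ∑ i ∈ haPfin.toFinset, ((Real.sqrt r : ℂ) ^ i) • aP i := by
  apply finsum_eq_finset_sum_of_support_subset
  intro i hi
  simp only [Function.mem_support, ne_eq] at hi
  simp only [Set.Finite.coe_toFinset, Set.mem_setOf_eq]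
  intro h0
  exact hi (by rw [h0, smul_zero])

include haPfin in
lemma finsum_aP_eq_sum : (∑ᶠ i : ℕ, aP i) = ∑ i ∈ haPfin.toFinset, aP i := by
  apply finsum_eq_finset_sum_of_support_subset
  intro i hi
  simpa using hi

include haPfin in
lemma atil_eq (r : ℝ) :
    atil aP r = (2⁻¹ : ℂ) • (btil aP r + LinearMap.adjoint (btil aP r)) := by
  have h1 : atil aP r
      = ∑ i ∈ haPfin.toFinset, ((Real.sqrt r : ℂ) ^ i) • asym aP i := by
    apply finsum_eq_finset_sum_of_support_subset
    intro i hi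
    simp only [Function.mem_support, ne_eq] at hi
    simp only [Set.Finite.coe_toFinset, Set.mem_setOf_eq]
    intro h0
    exact hi (by simp [asym, h0])
  have h2 : LinearMap.adjoint (btil aP r)
      = ∑ i ∈ haPfin.toFinset, ((Real.sqrt r : ℂ) ^ i) • LinearMap.adjoint (aP i) := by
    rw [btil_eq_sum haPfin, map_sum]
    refine Finset.sum_congr rfl fun i _ => ?_
    rw [map_smulₛₗ]
    congr 1
    rw [← Complex.ofReal_pow, Complex.conj_ofReal, Complex.ofReal_pow]
  rw [h1, h2, btil_eq_sum haPfin, ← Finset.sum_add_distrib, Finset.smul_sum]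
  refine Finset.sum_congr rfl fun i _ => ?_
  simp only [asym]
  rw [smul_comm]
  rw [smul_add]


/-- **Lower bound on the nonzero eigenvalues of `ã_r`.**
Suppose `V^{p,q} = 0` unless `0 ≤ p ≤ k₀ − 1`.  Then there exist `c > 0` and `r₀ > 0` such
that for all `r ∈ (0, r₀)`, every nonzero eigenvalue `μ` of the self-adjoint operator `ã_r`
satisfies `|μ| ≥ c · r^{(k₀−1)/2}`. -/
theorem nonzero_eigenvalue_lower_bound
    {V : Type*} [NormedAddCommGroup V] [InnerProductSpace ℂ V] [FiniteDimensional ℂ V]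
    (W : ℤ × ℤ → Submodule ℂ V) (hW : DirectSum.IsInternal W)
    (hWfin : {pq : ℤ × ℤ | W pq ≠ ⊥}.Finite)
    (hWorth : ∀ pq pq' : ℤ × ℤ, pq ≠ pq' → ∀ x ∈ W pq, ∀ y ∈ W pq', (inner ℂ x y : ℂ) = 0)
    (aP : ℕ → Module.End ℂ V) (haPfin : {i : ℕ | aP i ≠ 0}.Finite)
    (haP2 : (∑ᶠ i : ℕ, aP i) * (∑ᶠ i : ℕ, aP i) = 0)
    (haPdeg : ∀ i : ℕ, ∀ p q : ℤ, ∀ x ∈ W (p, q), aP i x ∈ W (p + (i : ℤ), q + 1 - (i : ℤ)))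
    (k₀ : ℕ) (hk₀ : 1 ≤ k₀)
    (hsupp : ∀ p q : ℤ, W (p, q) ≠ ⊥ → 0 ≤ p ∧ p ≤ (k₀ : ℤ) - 1) :
    ∃ c > (0:ℝ), ∃ r₀ > (0:ℝ), ∀ r : ℝ, 0 < r → r < r₀ →
      ∀ μ ∈ spectrum ℂ (atil aP r), μ ≠ 0 →
        c * Real.sqrt r ^ (k₀ - 1) ≤ ‖μ‖ := by
  obtain ⟨m, hm, hmA⟩ := exists_lb (∑ᶠ i : ℕ, aP i)
  refine ⟨m / 2, by positivity, 1, one_pos, ?_⟩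
  intro r hr hr1 μ hμspec hμ0
  set σ : ℝ := Real.sqrt r with hσdef
  have hσ0 : 0 < σ := Real.sqrt_pos.2 hr
  have hσ1 : σ < 1 := by
    have := Real.sqrt_lt_sqrt hr.le hr1
    rwa [Real.sqrt_one] at this
  set A : Module.End ℂ V := ∑ᶠ i : ℕ, aP i with hAdef
  set cS : ℤ → ℝ := fun p => σ ^ p with hcSdef
  set cS' : ℤ → ℝ := fun p => σ ^ (-p) with hcS'def
  set S : Module.End ℂ V := scOp W cS with hSdef
  set S' : Module.End ℂ V := scOp W cS' with hS'def
  have hkcast : ((k₀ - 1 : ℕ) : ℤ) = (k₀ : ℤ) - 1 := by omega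
  -- conjugation identity
  have hb : btil aP r = S ∘ₗ (A ∘ₗ S') := by
    refine internal_ext hW fun pq x hx => ?_
    rcases pq with ⟨p, q⟩
    have hAx : A x = ∑ i ∈ haPfin.toFinset, aP i x := by
      rw [hAdef, finsum_aP_eq_sum haPfin, LinearMap.sum_apply]
    rw [LinearMap.comp_apply, LinearMap.comp_apply]
    rw [hS'def, scOp_apply hWfin hWorth _ hx, map_smul, map_smul]
    rw [hAx, map_sum]
    have hterm : ∀ i ∈ haPfin.toFinset,
        S (aP i x) = ((σ ^ ((p : ℤ) + (i : ℤ)) : ℝ) : ℂ) • aP i x := by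
      intro i _
      rw [hSdef, scOp_apply hWfin hWorth _ (haPdeg i p q x hx)]
    rw [Finset.sum_congr rfl hterm]
    rw [btil_eq_sum haPfin, LinearMap.sum_apply, Finset.smul_sum]
    refine Finset.sum_congr rfl fun i _ => ?_
    rw [LinearMap.smul_apply, smul_smul]
    congr 1
    rw [hcS'def]
    have hσℂ : (σ : ℂ) ≠ 0 := by exact_mod_cast hσ0.ne'
    push_cast
    rw [← zpow_add₀ hσℂ]
    rw [show -p + (p + (i : ℤ)) = ((i : ℕ) : ℤ) by ring, zpow_natCast]
  -- S S' = 1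
  have hSS' : S ∘ₗ S' = LinearMap.id := by
    rw [hSdef, hS'def, scOp_comp hWfin hWorth hW]
    have : (fun p => cS p * cS' p) = fun _ => (1:ℝ) := by
      funext p
      rw [hcSdef, hcS'def]
      simp only
      rw [← zpow_add₀ hσ0.ne']
      simp
    rw [this, scOp_one hWfin hWorth hW]
  have hS'S : S' ∘ₗ S = LinearMap.id := by
    rw [hSdef, hS'def, scOp_comp hWfin hWorth hW]
    have : (fun p => cS' p * cS p) = fun _ => (1:ℝ) := by
      funext p
      rw [hcSdef, hcS'def]
      simp only
      rw [← zpow_add₀ hσ0.ne']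
      simp
    rw [this, scOp_one hWfin hWorth hW]
  have hS'Spt : ∀ y, S' (S y) = y := fun y => by
    have := LinearMap.ext_iff.1 hS'S y
    simpa using this
  -- A ∘ A = 0
  have hA2 : A ∘ₗ A = 0 := by
    rw [hAdef, ← Module.End.mul_eq_comp]
    exact haP2
  -- b ∘ b = 0
  set bb : Module.End ℂ V := btil aP r with hbbdef
  have hb2 : bb ∘ₗ bb = 0 := by
    ext x
    rw [hb]
    simp only [LinearMap.comp_apply, LinearMap.zero_apply]
    rw [hS'Spt]
    have : A (A (S' x)) = 0 := by
      have := LinearMap.ext_iff.1 hA2 (S' x)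
      simpa using this
    rw [this]
    simp
  set cc : Module.End ℂ V := LinearMap.adjoint bb with hccdef
  have hc2 : cc ∘ₗ cc = 0 := by
    rw [hccdef, ← LinearMap.adjoint_comp, hb2]
    exact map_zero _
  -- norm lower bounds for S and S'
  have hγpos : (0:ℝ) < σ ^ (k₀ - 1) := by positivity
  have hSlb : ∀ x, σ ^ (k₀ - 1) * ‖x‖ ≤ ‖S x‖ := by
    intro x
    refine scOp_norm_lb hWfin hWorth hW cS (σ ^ (k₀ - 1)) hγpos.le (fun p q hbot => ?_) x
    obtain ⟨hp0, hpk⟩ := hsupp p q hbot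
    rw [hcSdef]
    simp only
    have h1 : (σ ^ (k₀ - 1 : ℕ)) ^ 2
        = σ ^ (((k₀ - 1 : ℕ) : ℤ) + ((k₀ - 1 : ℕ) : ℤ)) := by
      rw [zpow_add₀ hσ0.ne', zpow_natCast]; ring
    have h2 : σ ^ (p : ℤ) * σ ^ (p : ℤ) = σ ^ (p + p) := (zpow_add₀ hσ0.ne' p p).symm
    rw [h1, h2]
    exact zpow_le_zpow_right_of_le_one₀ hσ0 hσ1.le (by omega)
  have hS'lb : ∀ x, (1:ℝ) * ‖x‖ ≤ ‖S' x‖ := by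
    intro x
    refine scOp_norm_lb hWfin hWorth hW cS' 1 one_pos.le (fun p q hbot => ?_) x
    obtain ⟨hp0, hpk⟩ := hsupp p q hbot
    rw [hcS'def]
    simp only
    have h2 : σ ^ (-p) * σ ^ (-p) = σ ^ (-p + -p) := (zpow_add₀ hσ0.ne' _ _).symm
    rw [one_pow, h2, ← zpow_zero σ]
    exact zpow_le_zpow_right_of_le_one₀ hσ0 hσ1.le (by omega)
  -- the chain of lower bounds
  have G2 := adjoint_lb A m hm hmA
  have G3 := comp_lb S' (LinearMap.adjoint A) 1 m one_pos hm.le hS'lb G2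
  have G4 := adjoint_lb (S' ∘ₗ LinearMap.adjoint A) (1 * m) (by simpa using hm) G3
  have hadj1 : LinearMap.adjoint (S' ∘ₗ LinearMap.adjoint A) = A ∘ₗ S' := by
    rw [LinearMap.adjoint_comp, LinearMap.adjoint_adjoint, hS'def, scOp_adjoint hWfin]
  rw [hadj1] at G4
  have G5 := comp_lb S (A ∘ₗ S') (σ ^ (k₀ - 1)) (1 * m) hγpos (by simpa using hm.le) hSlb G4
  rw [← hb] at G5
  set β : ℝ := σ ^ (k₀ - 1) * (1 * m) with hβdef
  have hβpos : 0 < β := by positivity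
  have hbB : ∀ x ∈ (LinearMap.ker bb)ᗮ, β * ‖x‖ ≤ ‖bb x‖ := G5
  have G6 := adjoint_lb bb β hβpos hbB
  -- eigenvector
  have heig : Module.End.HasEigenvalue (atil aP r) μ :=
    Module.End.hasEigenvalue_iff_mem_spectrum.2 hμspec
  obtain ⟨v, hv⟩ := heig.exists_hasEigenvector
  have hv0 : v ≠ 0 := hv.2
  have hveq : atil aP r v = μ • v := hv.apply_eq_smul
  have hatil : atil aP r = (2⁻¹ : ℂ) • (bb + cc) := atil_eq haPfin r
  have hsum : bb v + cc v = ((2:ℂ) * μ) • v := by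
    have key : (bb + cc) v = (2:ℂ) • (μ • v) := by
      calc (bb + cc) v = (2:ℂ) • ((2⁻¹:ℂ) • ((bb + cc) v)) := by
            rw [smul_smul]; norm_num
        _ = (2:ℂ) • ((((2⁻¹:ℂ) • (bb + cc)) : Module.End ℂ V) v) := rfl
        _ = (2:ℂ) • (μ • v) := by rw [← hatil, hveq]
    rw [LinearMap.add_apply, smul_smul] at key
    exact key
  -- Laplacian identity
  have hbbv : bb (bb v) = 0 := by
    have := LinearMap.ext_iff.1 hb2 v
    simpa using this
  have hccv : cc (cc v) = 0 := by
    have := LinearMap.ext_iff.1 hc2 v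
    simpa using this
  have hlap : bb (cc v) + cc (bb v) = (((2:ℂ) * μ) * ((2:ℂ) * μ)) • v := by
    have h1 : bb (bb v + cc v) + cc (bb v + cc v) = ((2:ℂ)*μ) • (bb v + cc v) := by
      rw [hsum, map_smul, map_smul, ← smul_add, hsum]
    rw [map_add, map_add, hbbv, hccv, zero_add, add_zero] at h1
    rw [h1, hsum, smul_smul]
  -- inner product identity
  have hinner : ((‖cc v‖ ^ 2 + ‖bb v‖ ^ 2 : ℝ) : ℂ)
      = (((2:ℂ) * μ) * ((2:ℂ) * μ)) * ((‖v‖ ^ 2 : ℝ) : ℂ) := by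
    have h1 := congrArg (fun w => (inner ℂ v w : ℂ)) hlap
    simp only [inner_add_right, inner_smul_right] at h1
    have e1 : (inner ℂ v (bb (cc v)) : ℂ) = inner ℂ (cc v) (cc v) :=
      (LinearMap.adjoint_inner_left bb (cc v) v).symm
    have e2 : (inner ℂ v (cc (bb v)) : ℂ) = inner ℂ (bb v) (bb v) :=
      LinearMap.adjoint_inner_right bb v (bb v)
    rw [e1, e2, inner_self_eq_norm_sq_to_K, inner_self_eq_norm_sq_to_K,
      inner_self_eq_norm_sq_to_K] at h1
    norm_cast at h1
  have hreal : ‖cc v‖ ^ 2 + ‖bb v‖ ^ 2 = 4 * ‖μ‖ ^ 2 * ‖v‖ ^ 2 := by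
    have h1 := congrArg norm hinner
    simp only [norm_mul, Complex.norm_real, Real.norm_eq_abs, Complex.norm_two] at h1
    rw [abs_of_nonneg (by positivity : (0:ℝ) ≤ ‖cc v‖ ^ 2 + ‖bb v‖ ^ 2),
      abs_of_nonneg (by positivity : (0:ℝ) ≤ ‖v‖ ^ 2)] at h1
    rw [h1]; ring
  -- Hodge decomposition of v
  have hkerbb : LinearMap.ker bb = (LinearMap.range cc)ᗮ := by
    rw [hccdef, ← ker_adjoint_End, LinearMap.adjoint_adjoint]
  have hkercc : LinearMap.ker cc = (LinearMap.range bb)ᗮ := ker_adjoint_End bb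
  have hvK : v ∈ (LinearMap.ker bb ⊓ LinearMap.ker cc : Submodule ℂ V)ᗮ := by
    intro z hz
    obtain ⟨hz1, hz2⟩ := Submodule.mem_inf.1 hz
    have hbz : bb z = 0 := LinearMap.mem_ker.1 hz1
    have hcz : cc z = 0 := LinearMap.mem_ker.1 hz2
    have h1 : (inner ℂ z (bb v + cc v) : ℂ) = 0 := by
      rw [inner_add_right]
      have e1 : (inner ℂ z (bb v) : ℂ) = inner ℂ (cc z) v := by
        rw [hccdef, LinearMap.adjoint_inner_left]
      have e2 : (inner ℂ z (cc v) : ℂ) = inner ℂ (bb z) v := by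
        rw [hccdef, LinearMap.adjoint_inner_right]
      rw [e1, e2, hbz, hcz]
      simp
    rw [hsum, inner_smul_right] at h1
    have h2μ : (2:ℂ) * μ ≠ 0 := by
      simp [hμ0]
    exact (mul_eq_zero.1 h1).resolve_left h2μ
  have hKeq : (LinearMap.ker bb ⊓ LinearMap.ker cc : Submodule ℂ V)ᗮ
      = LinearMap.range cc ⊔ LinearMap.range bb := by
    rw [hkerbb, hkercc, Submodule.inf_orthogonal, Submodule.orthogonal_orthogonal]
  rw [hKeq] at hvK
  obtain ⟨qv, hqv, pv, hpv, hvsum⟩ := Submodule.mem_sup.1 hvK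
  obtain ⟨y, hy⟩ := hqv
  obtain ⟨x, hx⟩ := hpv
  -- qv = cc y ∈ range cc, pv = bb x ∈ range bb
  have hbv : bb v = bb qv := by
    rw [← hvsum, map_add, ← hx]
    have : bb (bb x) = 0 := by
      have := LinearMap.ext_iff.1 hb2 x
      simpa using this
    rw [this, add_zero]
  have hcv : cc v = cc pv := by
    rw [← hvsum, map_add, ← hy]
    have : cc (cc y) = 0 := by
      have := LinearMap.ext_iff.1 hc2 y
      simpa using this
    rw [this, zero_add]
  have hq_orth : qv ∈ (LinearMap.ker bb)ᗮ := by
    rw [hkerbb]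
    exact Submodule.le_orthogonal_orthogonal _ ⟨y, hy⟩
  have hp_orth : pv ∈ (LinearMap.ker cc)ᗮ := by
    rw [hkercc]
    exact Submodule.le_orthogonal_orthogonal _ ⟨x, hx⟩
  have hpq : (inner ℂ qv pv : ℂ) = 0 := by
    rw [← hy, ← hx, hccdef, LinearMap.adjoint_inner_left]
    have : bb (bb x) = 0 := by
      have := LinearMap.ext_iff.1 hb2 x
      simpa using this
    rw [this, inner_zero_right]
  have hnormv : ‖v‖ ^ 2 = ‖qv‖ ^ 2 + ‖pv‖ ^ 2 := by
    rw [← hvsum, @norm_add_sq ℂ]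
    rw [hpq]
    simp
  -- combine
  have hbq := hbB qv hq_orth
  have hcp := G6 pv hp_orth
  rw [hbv] at hreal
  rw [hcv] at hreal
  have hvpos : 0 < ‖v‖ := norm_pos_iff.2 hv0
  have habs : 0 ≤ ‖μ‖ := norm_nonneg μ
  have hcp' : β * ‖pv‖ ≤ ‖cc pv‖ := hcp
  have h1 : β ^ 2 * ‖qv‖ ^ 2 ≤ ‖bb qv‖ ^ 2 := by
    have := pow_le_pow_left₀ (by positivity : (0:ℝ) ≤ β * ‖qv‖) hbq 2
    rw [mul_pow] at this
    exact this
  have h2 : β ^ 2 * ‖pv‖ ^ 2 ≤ ‖cc pv‖ ^ 2 := by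
    have := pow_le_pow_left₀ (by positivity : (0:ℝ) ≤ β * ‖pv‖) hcp' 2
    rw [mul_pow] at this
    exact this
  have hreal' : ‖cc pv‖ ^ 2 + ‖bb qv‖ ^ 2
      = 4 * ‖μ‖ ^ 2 * (‖qv‖ ^ 2 + ‖pv‖ ^ 2) := by
    rw [← hnormv]; exact hreal
  have h3 : β ^ 2 * ‖v‖ ^ 2 ≤ 4 * ‖μ‖ ^ 2 * ‖v‖ ^ 2 := by
    rw [hnormv]
    linarith [h1, h2, hreal']
  have h4 : β ^ 2 ≤ (2 * ‖μ‖) ^ 2 := by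
    have h5 := le_of_mul_le_mul_right
      (by linarith [h3] : β ^ 2 * ‖v‖ ^ 2 ≤ (4 * ‖μ‖ ^ 2) * ‖v‖ ^ 2)
      (by positivity : (0:ℝ) < ‖v‖ ^ 2)
    have h6 : (2 * ‖μ‖) ^ 2 = 4 * ‖μ‖ ^ 2 := by ring
    rw [h6]
    exact h5
  have hfinal : β ≤ 2 * ‖μ‖ :=
    le_of_pow_le_pow_left₀ two_ne_zero (by positivity) h4
  have heq : m / 2 * σ ^ (k₀ - 1) = β / 2 := by rw [hβdef]; ring
  calc m / 2 * σ ^ (k₀ - 1) = β / 2 := heq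
    _ ≤ ‖μ‖ := by linarith
end
end

section
/- Let K be a field, let E = ⨁_{p,q ∈ ℤ} E^{p,q} be a bigraded K-vector space with only finitely many nonzero summands, each finite-dimensional, let k ∈ ℤ, and let d ∈ End(E) satisfy d² = 0 and d(E^{p,q}) ⊆ E^{p+k, q+1−k} for all p, q. Define the bigraded cohomology H^{p,q} := (ker d ∩ E^{p,q}) / (im d ∩ E^{p,q}). Then Σ_{p,q} (−1)^{p+q} · p · (dim H^{p,q} − dim E^{p,q}) = k · Σ_{p,q} (−1)^{p+q} · (p+q) · (dim H^{p,q} − dim E^{p,q}). Equivalently, writing N(X) := Σ_{p,q} (−1)^{p+q} p · dim X^{p,q} and χ′(X) := Σ_{p,q} (−1)^{p+q} (p+q) · dim X^{p,q} for a bigraded space X, one has N(H) − N(E) = k·(χ′(H) − χ′(E)). -/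
noncomputable section

/-- The dimension of the cohomology `(ker d ∩ U)/(im d ∩ U)` of `d` "at" a subspace `U`. -/
def bigradedCohomDim {K V : Type*} [Field K] [AddCommGroup V] [Module K V]
    (d : Module.End K V) (U : Submodule K V) : ℕ :=
  Module.finrank K
    (↥(LinearMap.ker d ⊓ U) ⧸
      Submodule.comap (LinearMap.ker d ⊓ U).subtype (LinearMap.range d ⊓ U))

section Aux

variable {K V : Type*} [Field K] [AddCommGroup V] [Module K V] [FiniteDimensional K V]

lemma cohomDim_eq_int (d : Module.End K V) (U : Submodule K V)
    (h : LinearMap.range d ⊓ U ≤ LinearMap.ker d ⊓ U) :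
    (bigradedCohomDim d U : ℤ)
      = (Module.finrank K ↥(LinearMap.ker d ⊓ U) : ℤ)
        - (Module.finrank K ↥(LinearMap.range d ⊓ U) : ℤ) := by
  have h1 := Submodule.finrank_quotient_add_finrank
    (Submodule.comap (LinearMap.ker d ⊓ U).subtype (LinearMap.range d ⊓ U))
  have h2 : Module.finrank K
      ↥(Submodule.comap (LinearMap.ker d ⊓ U).subtype (LinearMap.range d ⊓ U))
      = Module.finrank K ↥(LinearMap.range d ⊓ U) :=
    (Submodule.comapSubtypeEquivOfLe h).finrank_eq
  unfold bigradedCohomDim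
  omega

lemma ker_inf_dim (d : Module.End K V) (U : Submodule K V) :
    Module.finrank K ↥(LinearMap.ker d ⊓ U) + Module.finrank K ↥(Submodule.map d U)
      = Module.finrank K ↥U := by
  have h := LinearMap.finrank_range_add_finrank_ker (d ∘ₗ U.subtype)
  rw [LinearMap.range_comp, Submodule.range_subtype, LinearMap.ker_comp] at h
  have e : Submodule.comap U.subtype (LinearMap.ker d)
      = Submodule.comap U.subtype (LinearMap.ker d ⊓ U) := by
    rw [Submodule.comap_inf, Submodule.comap_subtype_self, inf_top_eq]
  rw [e, (Submodule.comapSubtypeEquivOfLe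
      (inf_le_right : LinearMap.ker d ⊓ U ≤ U)).finrank_eq] at h
  omega

end Aux

/-- **Counting lemma for a differential of bidegree `(k, 1−k)`.**
Let `E = ⨁_{p,q} E^{p,q}` be a finite-dimensional bigraded vector space over a field and
let `d` satisfy `d² = 0` and `d(E^{p,q}) ⊆ E^{p+k,q+1−k}`.  With
`H^{p,q} = (ker d ∩ E^{p,q})/(im d ∩ E^{p,q})` one has
`∑ (−1)^{p+q} p (dim H^{p,q} − dim E^{p,q}) = k ∑ (−1)^{p+q} (p+q) (dim H^{p,q} − dim E^{p,q})`,
i.e. `N(H) − N(E) = k (χ′(H) − χ′(E))`. -/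
theorem bigraded_differential_weighted_count
    {K V : Type*} [Field K] [AddCommGroup V] [Module K V] [FiniteDimensional K V]
    (W : ℤ × ℤ → Submodule K V) (hW : DirectSum.IsInternal W)
    (hWfin : {pq : ℤ × ℤ | W pq ≠ ⊥}.Finite)
    (k : ℤ) (d : Module.End K V) (hd2 : d * d = 0)
    (hdeg : ∀ p q : ℤ, ∀ x ∈ W (p, q), d x ∈ W (p + k, q + 1 - k)) :
    (∑ᶠ pq : ℤ × ℤ, (Int.negOnePow (pq.1 + pq.2) : ℤ) * pq.1 *
        ((bigradedCohomDim d (W pq) : ℤ) - (Module.finrank K ↥(W pq) : ℤ)))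
      = k * ∑ᶠ pq : ℤ × ℤ, (Int.negOnePow (pq.1 + pq.2) : ℤ) * (pq.1 + pq.2) *
        ((bigradedCohomDim d (W pq) : ℤ) - (Module.finrank K ↥(W pq) : ℤ)) := by
  classical
  -- the degree-shift equivalence
  set eqv : ℤ × ℤ ≃ ℤ × ℤ :=
    { toFun := fun pq => (pq.1 + k, pq.2 + 1 - k)
      invFun := fun pq => (pq.1 - k, pq.2 + k - 1)
      left_inv := fun pq => by obtain ⟨p, q⟩ := pq; simp only [Prod.mk.injEq]; constructor <;> ring
      right_inv := fun pq => by obtain ⟨p, q⟩ := pq; simp only [Prod.mk.injEq]; constructor <;> ring } with heqv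
  set s : ℤ × ℤ → ℤ := fun pq => (Int.negOnePow (pq.1 + pq.2) : ℤ) with hs
  set g : ℤ × ℤ → ℤ := fun pq => (Module.finrank K ↥(Submodule.map d (W pq)) : ℤ) with hg
  -- d maps W pq into W (eqv pq)
  have hmapW : ∀ pq : ℤ × ℤ, Submodule.map d (W pq) ≤ W (pq.1 + k, pq.2 + 1 - k) := by
    rintro ⟨p, q⟩ x hx
    obtain ⟨y, hy, rfl⟩ := hx
    exact hdeg p q y hy
  -- range d ≤ ker d
  have hrk : LinearMap.range d ≤ LinearMap.ker d := by
    rintro x ⟨y, rfl⟩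
    simp [LinearMap.mem_ker, ← Module.End.mul_apply, hd2]
  -- identification of range d ⊓ W pq
  have hrange : ∀ pq : ℤ × ℤ, LinearMap.range d ⊓ W pq
      = Submodule.map d (W (pq.1 - k, pq.2 + k - 1)) := by
    intro pq
    set i0 : ℤ × ℤ := (pq.1 - k, pq.2 + k - 1) with hi0
    have hfix : (i0.1 + k, i0.2 + 1 - k) = pq := by
      obtain ⟨p, q⟩ := pq; simp only [hi0, Prod.mk.injEq]; constructor <;> ring
    have hle : Submodule.map d (W i0) ≤ W pq := by
      have := hmapW i0; rwa [hfix] at this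
    have hr : LinearMap.range d = ⨆ i, Submodule.map d (W i) := by
      rw [← Submodule.map_top, ← hW.submodule_iSup_eq_top, Submodule.map_iSup]
    rw [hr, iSup_split_single (fun i => Submodule.map d (W i)) i0,
        sup_inf_assoc_of_le _ hle]
    have hrest : (⨆ i, ⨆ _ : i ≠ i0, Submodule.map d (W i)) ⊓ W pq = ⊥ := by
      rw [eq_bot_iff]
      have hsub : (⨆ i, ⨆ _ : i ≠ i0, Submodule.map d (W i))
          ≤ ⨆ j, ⨆ _ : j ≠ pq, W j := by
        refine iSup₂_le fun i hi => ?_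
        have hne : (i.1 + k, i.2 + 1 - k) ≠ pq := by
          intro hcontra
          apply hi
          obtain ⟨p, q⟩ := pq
          obtain ⟨a, b⟩ := i
          simp only [Prod.mk.injEq, hi0] at hcontra ⊢
          omega
        exact le_trans (hmapW i)
          (le_iSup₂ (f := fun (j : ℤ × ℤ) (_ : j ≠ pq) => W j) _ hne)
      have hdisj := hW.submodule_iSupIndep pq
      rw [disjoint_iff] at hdisj
      calc (⨆ i, ⨆ _ : i ≠ i0, Submodule.map d (W i)) ⊓ W pq
          ≤ (⨆ j, ⨆ _ : j ≠ pq, W j) ⊓ W pq := inf_le_inf_right _ hsub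
        _ = W pq ⊓ ⨆ j, ⨆ _ : j ≠ pq, W j := inf_comm _ _
        _ = ⊥ := hdisj
    rw [hrest, sup_bot_eq]
  -- pointwise identity
  have hpt : ∀ pq : ℤ × ℤ,
      (bigradedCohomDim d (W pq) : ℤ) - (Module.finrank K ↥(W pq) : ℤ)
        = -(g pq) - g (eqv.symm pq) := by
    intro pq
    have hsub : LinearMap.range d ⊓ W pq ≤ LinearMap.ker d ⊓ W pq :=
      inf_le_inf_right _ hrk
    have h2 := cohomDim_eq_int d (W pq) hsub
    have h3 := ker_inf_dim d (W pq)
    rw [hrange pq] at h2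
    have hsymm : eqv.symm pq = (pq.1 - k, pq.2 + k - 1) := rfl
    rw [hsymm, h2]
    simp only [hg]
    omega
  -- support finiteness
  have hgsupp : (Function.support g).Finite := by
    apply hWfin.subset
    intro pq hpq
    simp only [Function.mem_support, hg] at hpq
    intro hbot
    apply hpq
    rw [hbot, Submodule.map_bot]
    simp
  have hsupp1 : ∀ c : ℤ × ℤ → ℤ, (Function.support fun pq => c pq * g pq).Finite := by
    intro c
    apply hgsupp.subset
    intro pq hpq
    simp only [Function.mem_support] at hpq ⊢
    intro h0; apply hpq; rw [h0, mul_zero]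
  have hsupp2 : ∀ c : ℤ × ℤ → ℤ,
      (Function.support fun pq => c pq * g (eqv.symm pq)).Finite := by
    intro c
    apply ((hgsupp.image eqv)).subset
    intro pq hpq
    simp only [Function.mem_support] at hpq
    refine ⟨eqv.symm pq, ?_, by simp⟩
    simp only [Function.mem_support]
    intro h0; apply hpq; rw [h0, mul_zero]
  -- sign flip under the shift
  have hsflip : ∀ pq : ℤ × ℤ, s (eqv pq) = -(s pq) := by
    rintro ⟨p, q⟩
    have h1 : (eqv (p, q)).1 + (eqv (p, q)).2 = (p + q) + 1 := by
      show (p + k) + (q + 1 - k) = (p + q) + 1; ring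
    simp only [hs, h1, Int.negOnePow_succ, Units.val_neg]
  -- the key reduction: for any weight F
  have hkey : ∀ F : ℤ × ℤ → ℤ,
      (∑ᶠ pq : ℤ × ℤ, s pq * F pq * (-(g pq) - g (eqv.symm pq)))
        = ∑ᶠ pq : ℤ × ℤ, (-(s pq) * F pq + s pq * F (eqv pq)) * g pq := by
    intro F
    calc ∑ᶠ pq : ℤ × ℤ, s pq * F pq * (-(g pq) - g (eqv.symm pq))
        = ∑ᶠ pq : ℤ × ℤ, ((-(s pq) * F pq) * g pq
            + (fun r : ℤ × ℤ => (-(s r) * F r) * g (eqv.symm r)) pq) :=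
          finsum_congr (by intro pq; dsimp; ring)
      _ = (∑ᶠ pq : ℤ × ℤ, (-(s pq) * F pq) * g pq)
            + ∑ᶠ pq : ℤ × ℤ, (-(s pq) * F pq) * g (eqv.symm pq) :=
          finsum_add_distrib (hsupp1 _) (hsupp2 _)
      _ = (∑ᶠ pq : ℤ × ℤ, (-(s pq) * F pq) * g pq)
            + ∑ᶠ pq : ℤ × ℤ, (-(s (eqv pq)) * F (eqv pq)) * g pq := by
          congr 1
          rw [← finsum_comp_equiv eqv (f := fun r : ℤ × ℤ => (-(s r) * F r) * g (eqv.symm r))]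
          exact finsum_congr (by intro pq; simp)
      _ = ∑ᶠ pq : ℤ × ℤ, ((-(s pq) * F pq) * g pq + (-(s (eqv pq)) * F (eqv pq)) * g pq) :=
          (finsum_add_distrib (hsupp1 _) (hsupp1 _)).symm
      _ = ∑ᶠ pq : ℤ × ℤ, (-(s pq) * F pq + s pq * F (eqv pq)) * g pq :=
          finsum_congr (by intro pq; rw [hsflip pq]; ring)
  -- rewrite both sides
  have hL : (∑ᶠ pq : ℤ × ℤ, (Int.negOnePow (pq.1 + pq.2) : ℤ) * pq.1 *
        ((bigradedCohomDim d (W pq) : ℤ) - (Module.finrank K ↥(W pq) : ℤ)))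
      = ∑ᶠ pq : ℤ × ℤ, (k * s pq) * g pq := by
    calc (∑ᶠ pq : ℤ × ℤ, (Int.negOnePow (pq.1 + pq.2) : ℤ) * pq.1 *
          ((bigradedCohomDim d (W pq) : ℤ) - (Module.finrank K ↥(W pq) : ℤ)))
        = ∑ᶠ pq : ℤ × ℤ, s pq * pq.1 * (-(g pq) - g (eqv.symm pq)) :=
          finsum_congr (fun pq => by rw [hpt pq])
      _ = ∑ᶠ pq : ℤ × ℤ, (-(s pq) * pq.1 + s pq * (eqv pq).1) * g pq :=
          hkey (fun pq => pq.1)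
      _ = ∑ᶠ pq : ℤ × ℤ, (k * s pq) * g pq :=
          finsum_congr (by rintro ⟨p, q⟩; show (-(s (p,q)) * p + s (p,q) * (p + k)) * _ = _; ring)
  have hR : (∑ᶠ pq : ℤ × ℤ, (Int.negOnePow (pq.1 + pq.2) : ℤ) * (pq.1 + pq.2) *
        ((bigradedCohomDim d (W pq) : ℤ) - (Module.finrank K ↥(W pq) : ℤ)))
      = ∑ᶠ pq : ℤ × ℤ, s pq * g pq := by
    calc (∑ᶠ pq : ℤ × ℤ, (Int.negOnePow (pq.1 + pq.2) : ℤ) * (pq.1 + pq.2) *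
          ((bigradedCohomDim d (W pq) : ℤ) - (Module.finrank K ↥(W pq) : ℤ)))
        = ∑ᶠ pq : ℤ × ℤ, s pq * (pq.1 + pq.2) * (-(g pq) - g (eqv.symm pq)) :=
          finsum_congr (fun pq => by rw [hpt pq])
      _ = ∑ᶠ pq : ℤ × ℤ, (-(s pq) * (pq.1 + pq.2) + s pq * ((eqv pq).1 + (eqv pq).2)) * g pq :=
          hkey (fun pq => pq.1 + pq.2)
      _ = ∑ᶠ pq : ℤ × ℤ, s pq * g pq :=
          finsum_congr (by
            rintro ⟨p, q⟩
            show (-(s (p,q)) * (p + q) + s (p,q) * ((p + k) + (q + 1 - k))) * _ = _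
            ring)
  rw [hL, hR, mul_finsum _ _]
  exact finsum_congr (by intro pq; ring)
end
end

section
/- Let K be a field and let (E_j)_{j ≥ 0} be a sequence of bigraded finite-dimensional K-vector spaces E_j = ⨁_{p,q ∈ ℤ} E_j^{p,q} (each with only finitely many nonzero summands), together with operators d_j ∈ End(E_j) satisfying d_j² = 0 and d_j(E_j^{p,q}) ⊆ E_j^{p+j, q+1−j}, such that for all j, p, q there are isomorphisms E_{j+1}^{p,q} ≅ (ker d_j ∩ E_j^{p,q}) / (im d_j ∩ E_j^{p,q}). Suppose there is k₀ ≥ 1 with d_j = 0 for all j ≥ k₀ (so E_j ≅ E_{k₀} for j ≥ k₀). Define χ′(E_j) := Σ_{p,q} (−1)^{p+q} (p+q) · dim E_j^{p,q}. Then Σ_{p,q} (−1)^{p+q} · p · dim E_0^{p,q} = Σ_{p,q} (−1)^{p+q} · p · dim E_{k₀}^{p,q} + Σ_{j=1}^{k₀−1} (χ′(E_j) − χ′(E_{k₀})). -/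
noncomputable section

open Module

section SpectralAux

variable {K V V' : Type*} [Field K] [AddCommGroup V] [Module K V]

lemma range_inf_graded (W : ℤ × ℤ → Submodule K V) (hW : DirectSum.IsInternal W)
    (d : Module.End K V) (σ : ℤ × ℤ)
    (hdeg : ∀ pq : ℤ × ℤ, ∀ x ∈ W pq, d x ∈ W (pq + σ)) (pq : ℤ × ℤ) :
    LinearMap.range d ⊓ W (pq + σ) = (W pq).map d := by
  apply le_antisymm
  · rintro x ⟨hx1, hx2⟩
    obtain ⟨y, rfl⟩ := hx1
    set e := LinearEquiv.ofBijective (DirectSum.coeLinearMap W) hW with he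
    have key : ∀ z : V, ((e.symm (d z)) (pq + σ) : V) ∈ (W pq).map d := by
      intro z
      have hz : z ∈ ⨆ i, W i := hW.submodule_iSup_eq_top ▸ Submodule.mem_top
      refine Submodule.iSup_induction
        (motive := fun z => ((e.symm (d z)) (pq + σ) : V) ∈ (W pq).map d) W hz ?_ ?_ ?_
      · intro ab x hx
        have hdx : d x ∈ W (ab + σ) := hdeg ab x hx
        by_cases hab : ab = pq
        · subst hab
          rw [hW.ofBijective_coeLinearMap_of_mem hdx]
          exact ⟨x, hx, rfl⟩
        · rw [hW.ofBijective_coeLinearMap_of_mem_ne (by simpa using hab) hdx]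
          exact Submodule.zero_mem _
      · simp
      · intro x y hx hy
        rw [map_add, map_add, DirectSum.add_apply, Submodule.coe_add]
        exact Submodule.add_mem _ hx hy
    have hcomp := hW.ofBijective_coeLinearMap_of_mem hx2
    have hval : ((e.symm (d y)) (pq + σ) : V) = d y := by rw [hcomp]
    rw [← hval]
    exact key y
  · rintro x ⟨y, hy, rfl⟩
    exact ⟨⟨y, rfl⟩, hdeg pq y hy⟩

lemma finrank_ker_inf_add [FiniteDimensional K V] (W' : Submodule K V) (d : Module.End K V) :
    finrank K ↥(LinearMap.ker d ⊓ W') + finrank K ↥(W'.map d) = finrank K ↥W' := by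
  have h := LinearMap.finrank_range_add_finrank_ker ((d : V →ₗ[K] V) ∘ₗ W'.subtype)
  rw [LinearMap.range_comp, LinearMap.ker_comp, Submodule.range_subtype] at h
  have hker : Submodule.comap W'.subtype (LinearMap.ker d)
      = Submodule.comap W'.subtype (LinearMap.ker d ⊓ W') := by
    ext x
    simp [x.2]
  rw [hker, (Submodule.comapSubtypeEquivOfLe (inf_le_right :
    LinearMap.ker d ⊓ W' ≤ W')).finrank_eq] at h
  omega

variable [FiniteDimensional K V] [AddCommGroup V'] [Module K V']

lemma finrank_next_page (W : ℤ × ℤ → Submodule K V) (hW : DirectSum.IsInternal W)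
    (W' : ℤ × ℤ → Submodule K V')
    (d : Module.End K V) (hd2 : d * d = 0) (σ : ℤ × ℤ)
    (hdeg : ∀ pq : ℤ × ℤ, ∀ x ∈ W pq, d x ∈ W (pq + σ))
    (hiso : ∀ pq : ℤ × ℤ, Nonempty ((↥(LinearMap.ker d ⊓ W pq) ⧸
        Submodule.comap (LinearMap.ker d ⊓ W pq).subtype (LinearMap.range d ⊓ W pq))
        ≃ₗ[K] ↥(W' pq)))
    (pq : ℤ × ℤ) :
    (finrank K ↥(W' pq) : ℤ)
      = (finrank K ↥(W pq) : ℤ) - (finrank K ↥((W pq).map d) : ℤ)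
        - (finrank K ↥((W (pq - σ)).map d) : ℤ) := by
  have hrk : LinearMap.range d ≤ LinearMap.ker d := by
    rintro _ ⟨y, rfl⟩
    have h := DFunLike.congr_fun hd2 y
    simpa [LinearMap.mem_ker, Module.End.mul_apply] using h
  have hle : LinearMap.range d ⊓ W pq ≤ LinearMap.ker d ⊓ W pq :=
    inf_le_inf_right _ hrk
  have h1 := Submodule.finrank_quotient_add_finrank
    (Submodule.comap (LinearMap.ker d ⊓ W pq).subtype (LinearMap.range d ⊓ W pq))
  rw [(Submodule.comapSubtypeEquivOfLe hle).finrank_eq] at h1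
  have h2 : finrank K (↥(LinearMap.ker d ⊓ W pq) ⧸
      Submodule.comap (LinearMap.ker d ⊓ W pq).subtype (LinearMap.range d ⊓ W pq))
      = finrank K ↥(W' pq) := (hiso pq).some.finrank_eq
  have h3 : LinearMap.range d ⊓ W pq = (W (pq - σ)).map d := by
    have h := range_inf_graded W hW d σ hdeg (pq - σ)
    rwa [sub_add_cancel] at h
  have h4 := finrank_ker_inf_add (K := K) (W pq) d
  rw [h2, h3] at h1
  omega

lemma finsum_next_page (W : ℤ × ℤ → Submodule K V)
    (W' : ℤ × ℤ → Submodule K V')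
    (hfinW : {pq : ℤ × ℤ | W pq ≠ ⊥}.Finite)
    (d : Module.End K V) (σ : ℤ × ℤ)
    (hdim : ∀ pq : ℤ × ℤ, (finrank K ↥(W' pq) : ℤ)
      = (finrank K ↥(W pq) : ℤ) - (finrank K ↥((W pq).map d) : ℤ)
        - (finrank K ↥((W (pq - σ)).map d) : ℤ))
    (c : ℤ × ℤ → ℤ) :
    ∑ᶠ pq : ℤ × ℤ, c pq * (finrank K ↥(W' pq) : ℤ)
      = (∑ᶠ pq : ℤ × ℤ, c pq * (finrank K ↥(W pq) : ℤ))
        - ∑ᶠ pq : ℤ × ℤ, (c pq + c (pq + σ)) * (finrank K ↥((W pq).map d) : ℤ) := by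
  set g1 : ℤ × ℤ → ℤ := fun pq => c pq * (finrank K ↥(W pq) : ℤ) with hg1
  set g2 : ℤ × ℤ → ℤ := fun pq => c pq * (finrank K ↥((W pq).map d) : ℤ) with hg2
  set g3 : ℤ × ℤ → ℤ := fun pq => c pq * (finrank K ↥((W (pq - σ)).map d) : ℤ) with hg3
  set g4 : ℤ × ℤ → ℤ := fun pq => c (pq + σ) * (finrank K ↥((W pq).map d) : ℤ) with hg4
  have hbot : ∀ pq : ℤ × ℤ, W pq = ⊥ → finrank K ↥((W pq).map d) = 0 := by
    intro pq h
    rw [h, Submodule.map_bot]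
    exact finrank_bot K V
  have hs1 : (Function.support g1).Finite := by
    apply hfinW.subset
    intro pq hpq
    simp only [Function.mem_support, hg1] at hpq
    intro hW0
    apply hpq
    rw [hW0]
    simp [finrank_bot]
  have hs2 : (Function.support g2).Finite := by
    apply hfinW.subset
    intro pq hpq
    simp only [Function.mem_support, hg2] at hpq
    intro hW0
    rw [hbot pq hW0] at hpq
    simp at hpq
  have hs4 : (Function.support g4).Finite := by
    apply hfinW.subset
    intro pq hpq
    simp only [Function.mem_support, hg4] at hpq
    intro hW0
    rw [hbot pq hW0] at hpq
    simp at hpq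
  have hs3 : (Function.support g3).Finite := by
    apply ((hfinW.image (fun pq => pq + σ))).subset
    intro pq hpq
    simp only [Function.mem_support, hg3] at hpq
    refine ⟨pq - σ, ?_, by simp⟩
    intro hW0
    rw [hbot _ hW0] at hpq
    simp at hpq
  have hre : ∑ᶠ pq : ℤ × ℤ, g3 pq = ∑ᶠ pq : ℤ × ℤ, g4 pq := by
    rw [← finsum_comp_equiv (Equiv.addRight σ) (f := g3)]
    apply finsum_congr
    intro pq
    simp only [hg3, hg4, Equiv.coe_addRight]
    rw [show pq + σ - σ = pq by abel]
  calc ∑ᶠ pq : ℤ × ℤ, c pq * (finrank K ↥(W' pq) : ℤ)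
      = ∑ᶠ pq : ℤ × ℤ, (g1 pq - g2 pq - g3 pq) := by
        apply finsum_congr
        intro pq
        rw [hdim pq]
        ring
    _ = (∑ᶠ pq, (g1 pq - g2 pq)) - ∑ᶠ pq, g3 pq :=
        finsum_sub_distrib ((hs1.union hs2).subset (Function.support_sub _ _)) hs3
    _ = ((∑ᶠ pq, g1 pq) - ∑ᶠ pq, g2 pq) - ∑ᶠ pq, g3 pq := by
        rw [finsum_sub_distrib hs1 hs2]
    _ = (∑ᶠ pq, g1 pq) - ((∑ᶠ pq, g2 pq) + ∑ᶠ pq, g4 pq) := by rw [hre]; ring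
    _ = (∑ᶠ pq, g1 pq) - ∑ᶠ pq, (g2 pq + g4 pq) := by rw [finsum_add_distrib hs2 hs4]
    _ = (∑ᶠ pq : ℤ × ℤ, c pq * (finrank K ↥(W pq) : ℤ))
        - ∑ᶠ pq : ℤ × ℤ, (c pq + c (pq + σ)) * (finrank K ↥((W pq).map d) : ℤ) := by
        congr 1
        apply finsum_congr
        intro pq
        simp only [hg2, hg4]
        ring

lemma telescope_identity (A B RR : ℕ → ℤ) (k₀ : ℕ) (hk₀ : 1 ≤ k₀)
    (hA : ∀ j, A (j + 1) = A j + (j : ℤ) * RR j)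
    (hB : ∀ j, B (j + 1) = B j + RR j) :
    A 0 = A k₀ + ∑ j ∈ Finset.Icc 1 (k₀ - 1), (B j - B k₀) := by
  have hAtel : ∀ n, A n = A 0 + ∑ j ∈ Finset.range n, (j : ℤ) * RR j := by
    intro n
    induction n with
    | zero => simp
    | succ n ih => rw [hA n, ih, Finset.sum_range_succ]; ring
  have hBtel : ∀ a b : ℕ, a ≤ b → B b = B a + ∑ j ∈ Finset.Ico a b, RR j := by
    intro a b hab
    induction b, hab using Nat.le_induction with
    | base => simp
    | succ n hn ih =>
      rw [hB n, ih, Finset.sum_Ico_succ_top hn]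
      ring
  have hIco' : ∀ j, Finset.Ico j k₀ = Finset.Icc j (k₀ - 1) := by
    intro j
    rw [← Finset.Ico_add_one_right_eq_Icc]
    congr 1
    omega
  have hIco : Finset.Ico 1 k₀ = Finset.Icc 1 (k₀ - 1) := hIco' 1
  have hsum1 : ∑ j ∈ Finset.Icc 1 (k₀ - 1), (B j - B k₀)
      = -∑ j ∈ Finset.Icc 1 (k₀ - 1), ∑ i ∈ Finset.Icc j (k₀ - 1), RR i := by
    rw [← Finset.sum_neg_distrib]
    apply Finset.sum_congr rfl
    intro j hj
    rw [Finset.mem_Icc] at hj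
    have hjk : j ≤ k₀ := le_trans hj.2 (Nat.pred_le k₀)
    rw [hBtel j k₀ hjk, hIco' j]
    ring
  have hswap : ∑ j ∈ Finset.Icc 1 (k₀ - 1), ∑ i ∈ Finset.Icc j (k₀ - 1), RR i
      = ∑ i ∈ Finset.Icc 1 (k₀ - 1), (i : ℤ) * RR i := by
    rw [Finset.sum_comm' (t' := Finset.Icc 1 (k₀ - 1)) (s' := fun i => Finset.Icc 1 i)]
    · apply Finset.sum_congr rfl
      intro i _
      rw [Finset.sum_const, Nat.card_Icc]
      simp [nsmul_eq_mul]
    · intro i j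
      simp only [Finset.mem_Icc]
      omega
  have hrange : ∑ j ∈ Finset.range k₀, (j : ℤ) * RR j
      = ∑ j ∈ Finset.Icc 1 (k₀ - 1), (j : ℤ) * RR j := by
    rw [Finset.range_eq_Ico, ← Finset.sum_Ico_consecutive _ (Nat.zero_le 1) hk₀, hIco]
    simp
  have hAk := hAtel k₀
  rw [hrange] at hAk
  rw [hsum1, hswap]
  linarith
end SpectralAux

/-- **Weighted-count identity for a degenerating spectral sequence.**
Let `(E_j, d_j)_{j≥0}` be an abstract spectral sequence of bigraded finite-dimensional
vector spaces over a field `K`: `d_j² = 0`, `d_j` has bidegree `(j, 1−j)`, and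
`E_{j+1}^{p,q} ≅ (ker d_j ∩ E_j^{p,q})/(im d_j ∩ E_j^{p,q})`.  Suppose `d_j = 0` for all
`j ≥ k₀` (so the sequence degenerates at page `k₀`).  With
`χ′(E_j) = ∑ (−1)^{p+q}(p+q) dim E_j^{p,q}`, one has
`∑ (−1)^{p+q} p dim E_0^{p,q}
   = ∑ (−1)^{p+q} p dim E_{k₀}^{p,q} + ∑_{j=1}^{k₀−1} (χ′(E_j) − χ′(E_{k₀}))`. -/
theorem spectral_sequence_filtration_number_identity
    {K : Type*} [Field K]
    (Vj : ℕ → Type*) [∀ j, AddCommGroup (Vj j)] [∀ j, Module K (Vj j)]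
    [∀ j, FiniteDimensional K (Vj j)]
    (W : ∀ j : ℕ, ℤ × ℤ → Submodule K (Vj j))
    (hWint : ∀ j : ℕ, DirectSum.IsInternal (W j))
    (hWfin : ∀ j : ℕ, {pq : ℤ × ℤ | W j pq ≠ ⊥}.Finite)
    (d : ∀ j : ℕ, Module.End K (Vj j))
    (hd2 : ∀ j : ℕ, d j * d j = 0)
    (hdeg : ∀ j : ℕ, ∀ p q : ℤ, ∀ x ∈ W j (p, q), (d j) x ∈ W j (p + (j : ℤ), q + 1 - (j : ℤ)))
    (hiso : ∀ (j : ℕ) (pq : ℤ × ℤ),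
      Nonempty
        ((↥(LinearMap.ker (d j) ⊓ W j pq) ⧸
            Submodule.comap (LinearMap.ker (d j) ⊓ W j pq).subtype
              (LinearMap.range (d j) ⊓ W j pq))
          ≃ₗ[K] ↥(W (j + 1) pq)))
    (k₀ : ℕ) (hk₀ : 1 ≤ k₀) (hdegenerate : ∀ j : ℕ, k₀ ≤ j → d j = 0) :
    (∑ᶠ pq : ℤ × ℤ, (Int.negOnePow (pq.1 + pq.2) : ℤ) * pq.1
        * (Module.finrank K ↥(W 0 pq) : ℤ))
      = (∑ᶠ pq : ℤ × ℤ, (Int.negOnePow (pq.1 + pq.2) : ℤ) * pq.1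
          * (Module.finrank K ↥(W k₀ pq) : ℤ))
        + ∑ j ∈ Finset.Icc 1 (k₀ - 1),
            ((∑ᶠ pq : ℤ × ℤ, (Int.negOnePow (pq.1 + pq.2) : ℤ) * (pq.1 + pq.2)
                * (Module.finrank K ↥(W j pq) : ℤ))
              - ∑ᶠ pq : ℤ × ℤ, (Int.negOnePow (pq.1 + pq.2) : ℤ) * (pq.1 + pq.2)
                * (Module.finrank K ↥(W k₀ pq) : ℤ)) := by
  classical
  set σf : ℕ → ℤ × ℤ := fun j => ((j : ℤ), 1 - (j : ℤ)) with hσf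
  have hdeg' : ∀ j : ℕ, ∀ pq : ℤ × ℤ, ∀ x ∈ W j pq, (d j) x ∈ W j (pq + σf j) := by
    intro j pq x hx
    have h := hdeg j pq.1 pq.2 x hx
    have heq : pq + σf j = (pq.1 + (j : ℤ), pq.2 + 1 - (j : ℤ)) := by
      simp only [hσf, Prod.ext_iff, Prod.fst_add, Prod.snd_add]
      constructor
      · trivial
      · ring
    rw [heq]
    exact h
  have hdim : ∀ j : ℕ, ∀ pq : ℤ × ℤ, (finrank K ↥(W (j + 1) pq) : ℤ)
      = (finrank K ↥(W j pq) : ℤ) - (finrank K ↥((W j pq).map (d j)) : ℤ)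
        - (finrank K ↥((W j (pq - σf j)).map (d j)) : ℤ) :=
    fun j pq => finrank_next_page (W j) (hWint j) (W (j + 1)) (d j) (hd2 j) (σf j)
      (hdeg' j) (hiso j) pq
  have hstep : ∀ (c : ℤ × ℤ → ℤ) (j : ℕ),
      (∑ᶠ pq : ℤ × ℤ, c pq * (finrank K ↥(W (j + 1) pq) : ℤ))
        = (∑ᶠ pq : ℤ × ℤ, c pq * (finrank K ↥(W j pq) : ℤ))
          - ∑ᶠ pq : ℤ × ℤ, (c pq + c (pq + σf j))
              * (finrank K ↥((W j pq).map (d j)) : ℤ) :=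
    fun c j => finsum_next_page (W j) (W (j + 1)) (hWfin j) (d j) (σf j) (hdim j) c
  obtain ⟨A, hA⟩ : ∃ A : ℕ → ℤ, ∀ j, A j = ∑ᶠ pq : ℤ × ℤ,
      (Int.negOnePow (pq.1 + pq.2) : ℤ) * pq.1 * (finrank K ↥(W j pq) : ℤ) :=
    ⟨_, fun j => rfl⟩
  obtain ⟨B, hB⟩ : ∃ B : ℕ → ℤ, ∀ j, B j = ∑ᶠ pq : ℤ × ℤ,
      (Int.negOnePow (pq.1 + pq.2) : ℤ) * (pq.1 + pq.2) * (finrank K ↥(W j pq) : ℤ) :=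
    ⟨_, fun j => rfl⟩
  obtain ⟨RR, hRR⟩ : ∃ RR : ℕ → ℤ, ∀ j, RR j = ∑ᶠ pq : ℤ × ℤ,
      (Int.negOnePow (pq.1 + pq.2) : ℤ) * (finrank K ↥((W j pq).map (d j)) : ℤ) :=
    ⟨_, fun j => rfl⟩
  have hfst : ∀ (j : ℕ) (pq : ℤ × ℤ), (pq + σf j).1 = pq.1 + (j : ℤ) := by
    intro j pq
    simp [hσf]
  have hsnd : ∀ (j : ℕ) (pq : ℤ × ℤ), (pq + σf j).1 + (pq + σf j).2 = (pq.1 + pq.2) + 1 := by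
    intro j pq
    simp only [hσf, Prod.fst_add, Prod.snd_add]
    ring
  have hstepA : ∀ j : ℕ, A (j + 1) = A j + (j : ℤ) * RR j := by
    intro j
    have h := hstep (fun pq => (Int.negOnePow (pq.1 + pq.2) : ℤ) * pq.1) j
    have hptw : ∀ pq : ℤ × ℤ,
        ((Int.negOnePow (pq.1 + pq.2) : ℤ) * pq.1
            + (Int.negOnePow ((pq + σf j).1 + (pq + σf j).2) : ℤ) * (pq + σf j).1)
          * (finrank K ↥((W j pq).map (d j)) : ℤ)
        = (-(j : ℤ)) • ((Int.negOnePow (pq.1 + pq.2) : ℤ)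
            * (finrank K ↥((W j pq).map (d j)) : ℤ)) := by
      intro pq
      rw [hsnd j pq, hfst j pq, Int.negOnePow_succ, smul_eq_mul]
      push_cast [Units.val_neg]
      ring
    rw [finsum_congr hptw, ← smul_finsum, smul_eq_mul] at h
    rw [hA, hA, hRR, h]
    ring
  have hstepB : ∀ j : ℕ, B (j + 1) = B j + RR j := by
    intro j
    have h := hstep (fun pq => (Int.negOnePow (pq.1 + pq.2) : ℤ) * (pq.1 + pq.2)) j
    have hptw : ∀ pq : ℤ × ℤ,
        ((Int.negOnePow (pq.1 + pq.2) : ℤ) * (pq.1 + pq.2)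
            + (Int.negOnePow ((pq + σf j).1 + (pq + σf j).2) : ℤ)
              * ((pq + σf j).1 + (pq + σf j).2))
          * (finrank K ↥((W j pq).map (d j)) : ℤ)
        = (-1 : ℤ) • ((Int.negOnePow (pq.1 + pq.2) : ℤ)
            * (finrank K ↥((W j pq).map (d j)) : ℤ)) := by
      intro pq
      rw [hsnd j pq, Int.negOnePow_succ, smul_eq_mul]
      push_cast [Units.val_neg]
      ring
    rw [finsum_congr hptw, ← smul_finsum, smul_eq_mul] at h
    rw [hB, hB, hRR, h]
    ring
  have final := telescope_identity A B RR k₀ hk₀ hstepA hstepB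
  simpa only [hA, hB] using final
end
end
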